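/- Transfer identity: let N = N₀ ⊕ N₁ orthogonally with ζ ∈ SO(N), ζ^k = Id_N, ζ = Id on N₀ and Id-ζ invertible on N₁; let γ ∈ ℂ with kγ = α+βτ (γ of order k in E_τ), J ∈ so(N) commuting with ζ with exp(J/k) = ζ, J = J₀⊕J₁; choose orientations o_{N₀}, o_{N₁}, o_N. Then for R ∈ so(N,J) and y ∈ ℂ sufficiently small: Z(0,J₀;τ,N₀,o_{N₀})(yJ₀+R₀) · [Os(J₁/k,o_{N₁})^{α+β} · Z(γ,J₁;τ,N₁,o_{N₁})(yJ₁+R₁)] = ε · Z(γ+y,J;τ,N,o_N)(R), where ε = Os(J₁/k,o_{N₁})^{α+β}·ε(J₀/k,N₀)^{α+β}·(o_N/(o_{N₀}∧o_{N₁})) and R₀,R₁ are the restrictions of R. -/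

import Mathlib

/- STATEMENT 18 (transfer formula, Theorem \ref{th:MainformulaElliptic}, diagonal model):
N = N₀⊕N₁, ζ ∈ SO(N), ζ^k = Id, ζ = Id on N₀ (rotation numbers of J₀ equal to kA_j) and
Id-ζ invertible on N₁ (rotation numbers a₁_j of J₁ not divisible by k); γ of order k in
E_τ with kγ = α+βτ; J = J₀⊕J₁ commutes with ζ, exp(J/k) = ζ; orientations on N₀, N₁, N
are recorded in the diagonal model by the signs ν₀, ν₁, ν, and Os(J₁/k,o_{N₁}) by the sign
os. Then for R ∈ so(N,J) (acting by 2iπr₀_j, 2iπr₁_j) and y: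
Z(0,J₀;τ,N₀,o_{N₀})(yJ₀+R₀)·[os^{α+β}·Z(γ,J₁;τ,N₁,o_{N₁})(yJ₁+R₁)]
  = ε·Z(γ+y,J;τ,N,o_N)(R),
ε = os^{α+β}·ε(J₀/k,N₀)^{α+β}·(o_N/(o_{N₀}∧o_{N₁})), with ε(J₀/k,N₀) = (-1)^{ΣA_j} and
o_N/(o_{N₀}∧o_{N₁}) = ν·ν₀·ν₁. -/

open Complex Real

noncomputable section

def qhex (τ : ℂ) : ℂ := Complex.exp ((π : ℂ) * I * τ)

def qex (τ : ℂ) : ℂ := Complex.exp (2 * (π : ℂ) * I * τ)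

def phiNumF (τ z : ℂ) (n : ℕ) : ℂ :=
  (1 + qhex τ ^ (2 * n + 1) * Complex.exp (2 * (π : ℂ) * I * z)) *
    (1 + qhex τ ^ (2 * n + 1) * Complex.exp (-(2 * (π : ℂ) * I * z)))

def phiDenF (τ z : ℂ) (n : ℕ) : ℂ :=
  (1 - qex τ ^ (n + 1) * Complex.exp (2 * (π : ℂ) * I * z)) *
    (1 - qex τ ^ (n + 1) * Complex.exp (-(2 * (π : ℂ) * I * z)))

def Phi1 (τ z : ℂ) : ℂ :=
  (Complex.exp (-((π : ℂ) * I * z)) - Complex.exp ((π : ℂ) * I * z))⁻¹ *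
    ((∏' n : ℕ, phiNumF τ z n) / (∏' n : ℕ, phiDenF τ z n))

/-- Str(e^{γJ}e^R,S_N,o_N) in the diagonal model. -/
def Zstr {ι : Type*} [Fintype ι] (ν : ℂ) (a : ι → ℤ) (r : ι → ℂ) (γ : ℂ) : ℂ :=
  ν * ∏ j, (Complex.exp (-((π : ℂ) * I * ((a j : ℂ) * γ + r j))) -
      Complex.exp ((π : ℂ) * I * ((a j : ℂ) * γ + r j)))

/-- Z(γ,J;τ,N,o_N)(R) = Tr(e^{γJ}e^R,W_{1,q}(N⊗ℂ))/Str(e^{γJ}e^R,S_N,o_N) in the diagonal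
model, with rotation numbers a and R-eigenvalue data r. -/
def Zdiag (τ : ℂ) {ι : Type*} [Fintype ι] (ν : ℂ) (a : ι → ℤ) (r : ι → ℂ) (γ : ℂ) : ℂ :=
  (∏ j, ∏' n : ℕ, phiNumF τ ((a j : ℂ) * γ + r j) n) /
    ((∏ j, ∏' n : ℕ, phiDenF τ ((a j : ℂ) * γ + r j) n) * Zstr ν a r γ)

/- Each `Zdiag` is the inverse orientation sign times a product, over the eigen-directions, of
the single function `Phi1 τ` evaluated at `a_j γ + r_j`. Written through q-Pochhammer symbols in
`h = e^{iπτ}` and `e = e^{iπz}`, the shifts `z ↦ z + 1` and `z ↦ z + τ` of `Phi1 τ z` become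
`e ↦ -e` and `e ↦ e h`; peeling one factor off each infinite product shows that `Phi1 τ` is
antiperiodic under both, so `Phi1 τ (z + c + d τ) = (-1)^(c+d) Phi1 τ z`. On `N₀` the argument
moves by `k A_j γ = A_j (α + β τ)`, which costs the sign `(-1)^(A_j (α+β))`; on `N₁` it does not
move. The orientation signs are `±1`, hence their own inverses. -/

lemma Finset.prod_zpow_eq_zpow_sum {ι G₀ : Type*} [CommGroupWithZero G₀] {x : G₀} (hx : x ≠ 0)
    (s : Finset ι) (n : ι → ℤ) : ∏ i ∈ s, x ^ n i = x ^ ∑ i ∈ s, n i := by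
  induction s using Finset.cons_induction with
  | empty => simp
  | cons a s ha ih => rw [Finset.sum_cons, Finset.prod_cons, zpow_add₀ hx, ih]

def qPochhammer (x c : ℂ) : ℂ := ∏' n : ℕ, (1 - c * x ^ n)

lemma multipliable_one_sub_mul_pow {x : ℂ} (hx : ‖x‖ < 1) (c : ℂ) :
    Multipliable fun n : ℕ => 1 - c * x ^ n := by
  have hsum : Summable fun n : ℕ => ‖-(c * x ^ n)‖ := by
    simpa only [norm_neg, norm_mul, norm_pow] using
      (summable_geometric_of_lt_one (norm_nonneg x) hx).mul_left ‖c‖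
  simpa only [sub_eq_add_neg] using multipliable_one_add_of_summable hsum

lemma qPochhammer_eq_one_sub_mul {x : ℂ} (hx : ‖x‖ < 1) {c c' : ℂ} (hc' : c * x = c') :
    qPochhammer x c = (1 - c) * qPochhammer x c' := by
  subst hc'
  have hshift : Multipliable fun n : ℕ => 1 - c * x ^ (n + 1) :=
    (multipliable_one_sub_mul_pow hx (c * x)).congr fun n => by ring
  rw [qPochhammer, tprod_eq_zero_mul' (f := fun n : ℕ => 1 - c * x ^ n) hshift, pow_zero, mul_one,
    qPochhammer]
  simp only [pow_succ', mul_assoc]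

def thetaQuotient (h e : ℂ) : ℂ :=
  (e⁻¹ - e)⁻¹ * (qPochhammer (h ^ 2) (-(h * e ^ 2)) * qPochhammer (h ^ 2) (-(h * (e ^ 2)⁻¹)) /
    (qPochhammer (h ^ 2) (h ^ 2 * e ^ 2) * qPochhammer (h ^ 2) (h ^ 2 * (e ^ 2)⁻¹)))

lemma thetaQuotient_neg (h e : ℂ) : thetaQuotient h (-e) = -thetaQuotient h e := by
  rw [thetaQuotient, thetaQuotient, neg_sq, inv_neg, show -e⁻¹ - -e = -(e⁻¹ - e) by ring, inv_neg,
    neg_mul]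

lemma thetaQuotient_mul_right {h e : ℂ} (hh : ‖h‖ < 1) (h0 : h ≠ 0) (e0 : e ≠ 0) :
    thetaQuotient h (e * h) = -thetaQuotient h e := by
  have hq : ‖h ^ 2‖ < 1 := by rw [norm_pow]; exact pow_lt_one₀ (norm_nonneg _) hh two_ne_zero
  rw [thetaQuotient, thetaQuotient,
    qPochhammer_eq_one_sub_mul hq (c := -(h * e ^ 2)) (c' := -(h * (e * h) ^ 2)) (by ring),
    qPochhammer_eq_one_sub_mul hq (c := -(h * ((e * h) ^ 2)⁻¹)) (c' := -(h * (e ^ 2)⁻¹))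
      (by field_simp),
    qPochhammer_eq_one_sub_mul hq (c := h ^ 2 * e ^ 2) (c' := h ^ 2 * (e * h) ^ 2) (by ring),
    qPochhammer_eq_one_sub_mul hq (c := h ^ 2 * ((e * h) ^ 2)⁻¹) (c' := h ^ 2 * (e ^ 2)⁻¹)
      (by field_simp)]
  -- The peeled-off factors may vanish, so they are turned into atoms `X, Y, W` times monomials
  -- in `e, h`: then `field_simp` only has to divide by `e` and `h`.
  have hS' : (e * h)⁻¹ - e * h = (1 - h ^ 2 * e ^ 2) * (e * h)⁻¹ := by field_simp
  have hS : e⁻¹ - e = (1 - e ^ 2) * e⁻¹ := by field_simp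
  have hY : 1 - -(h * ((e * h) ^ 2)⁻¹) = (1 - -(h * e ^ 2)) * (h * e ^ 2)⁻¹ := by
    field_simp; ring
  have hW : 1 - h ^ 2 * ((e * h) ^ 2)⁻¹ = -(1 - e ^ 2) * (e ^ 2)⁻¹ := by field_simp; ring
  rw [hS', hS, hY, hW]
  generalize 1 - h ^ 2 * e ^ 2 = X, 1 - -(h * e ^ 2) = Y, 1 - e ^ 2 = W
  field_simp

lemma norm_qhex_lt_one {τ : ℂ} (hτ : 0 < τ.im) : ‖qhex τ‖ < 1 := by
  rw [qhex, Complex.norm_exp, Real.exp_lt_one_iff]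
  simpa [Complex.mul_re, Complex.mul_im] using mul_pos Real.pi_pos hτ

lemma qex_eq_qhex_sq (τ : ℂ) : qex τ = qhex τ ^ 2 := by
  rw [qex, qhex, ← Complex.exp_nat_mul]; ring_nf

lemma Phi1_eq_thetaQuotient {τ : ℂ} (hτ : 0 < τ.im) (z : ℂ) :
    Phi1 τ z = thetaQuotient (qhex τ) (cexp (π * I * z)) := by
  have hq : ‖qhex τ ^ 2‖ < 1 := by
    rw [norm_pow]; exact pow_lt_one₀ (norm_nonneg _) (norm_qhex_lt_one hτ) two_ne_zero
  set h := qhex τ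
  set e := cexp (π * I * z)
  have hu : cexp (2 * π * I * z) = e ^ 2 := by rw [← Complex.exp_nat_mul]; ring_nf
  have hu' : cexp (-(2 * π * I * z)) = (e ^ 2)⁻¹ := by rw [Complex.exp_neg, hu]
  have hNum : ∀ n, phiNumF τ z n =
      (1 - -(h * e ^ 2) * (h ^ 2) ^ n) * (1 - -(h * (e ^ 2)⁻¹) * (h ^ 2) ^ n) := fun n => by
    rw [phiNumF, hu, hu']; ring
  have hDen : ∀ n, phiDenF τ z n =
      (1 - h ^ 2 * e ^ 2 * (h ^ 2) ^ n) * (1 - h ^ 2 * (e ^ 2)⁻¹ * (h ^ 2) ^ n) := fun n => by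
    rw [phiDenF, hu, hu', qex_eq_qhex_sq]; ring
  rw [Phi1, tprod_congr hNum, tprod_congr hDen,
    (multipliable_one_sub_mul_pow hq _).tprod_mul (multipliable_one_sub_mul_pow hq _),
    (multipliable_one_sub_mul_pow hq _).tprod_mul (multipliable_one_sub_mul_pow hq _),
    Complex.exp_neg]
  rfl

lemma Phi1_antiperiodic_one (τ : ℂ) : Function.Antiperiodic (Phi1 τ) 1 := fun z => by
  have h2 : cexp (2 * π * I * (z + 1)) = cexp (2 * π * I * z) := by
    rw [mul_add, mul_one, Complex.exp_periodic]
  have h2' : cexp (-(2 * π * I * (z + 1))) = cexp (-(2 * π * I * z)) := by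
    rw [mul_add, mul_one, neg_add, ← sub_eq_add_neg, Complex.exp_periodic.sub_eq]
  have hS : cexp (-(π * I * (z + 1))) - cexp (π * I * (z + 1)) =
      -(cexp (-(π * I * z)) - cexp (π * I * z)) := by
    rw [mul_add, mul_one, neg_add, ← sub_eq_add_neg, Complex.exp_antiperiodic.sub_eq,
      Complex.exp_antiperiodic, neg_sub_neg, neg_sub]
  simp only [Phi1, phiNumF, phiDenF, h2, h2', hS, inv_neg, neg_mul]

lemma Phi1_antiperiodic_tau {τ : ℂ} (hτ : 0 < τ.im) : Function.Antiperiodic (Phi1 τ) τ :=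
  fun z => by
    have hshift : cexp (π * I * (z + τ)) = cexp (π * I * z) * qhex τ := by
      rw [qhex, ← Complex.exp_add]; ring_nf
    rw [Phi1_eq_thetaQuotient hτ, Phi1_eq_thetaQuotient hτ, hshift,
      thetaQuotient_mul_right (norm_qhex_lt_one hτ) (Complex.exp_ne_zero _) (Complex.exp_ne_zero _)]

lemma Phi1_add_lattice {τ : ℂ} (hτ : 0 < τ.im) (z : ℂ) (c d : ℤ) :
    Phi1 τ (z + (c + d * τ)) = (-1) ^ (c + d) * Phi1 τ z := by
  rw [← mul_one (c : ℂ), ← add_assoc, (Phi1_antiperiodic_tau hτ).add_int_mul_eq,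
    (Phi1_antiperiodic_one τ).add_int_mul_eq, ← mul_assoc, ← Int.cast_mul, ← Units.val_mul,
    ← Int.negOnePow_add, Int.cast_negOnePow, add_comm d]

lemma Zdiag_eq_inv_mul_prod (τ : ℂ) {ι : Type*} [Fintype ι] (ν : ℂ) (a : ι → ℤ) (r : ι → ℂ)
    (γ : ℂ) : Zdiag τ ν a r γ = ν⁻¹ * ∏ j, Phi1 τ (a j * γ + r j) := by
  simp only [Zdiag, Zstr, Phi1, Finset.prod_mul_distrib, Finset.prod_inv_distrib,
    Finset.prod_div_distrib]
  ring

theorem transfer_formula_general (τ : ℂ) (hτ : 0 < τ.im)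
    (k α β : ℤ) (γ : ℂ) (hkγ : (k : ℂ) * γ = (α : ℂ) + (β : ℂ) * τ)
    {m₀ m₁ : ℕ} (A : Fin m₀ → ℤ) (a₁ : Fin m₁ → ℤ)
    (r₀ : Fin m₀ → ℂ) (r₁ : Fin m₁ → ℂ) (y : ℂ)
    (ν₀ ν₁ ν os : ℂ) (hν₀ : ν₀ = 1 ∨ ν₀ = -1) (hν₁ : ν₁ = 1 ∨ ν₁ = -1)
    (hν : ν = 1 ∨ ν = -1) :
    Zdiag τ ν₀ (fun j => k * A j) (fun j => y * ((k * A j : ℤ) : ℂ) + r₀ j) 0 *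
      (os ^ (α + β) * Zdiag τ ν₁ a₁ (fun j => y * ((a₁ j : ℂ)) + r₁ j) γ) =
    (os ^ (α + β) * ((-1 : ℂ) ^ (∑ j, A j)) ^ (α + β) * (ν * ν₀ * ν₁)) *
      Zdiag τ ν (Sum.elim (fun j => k * A j) a₁) (Sum.elim r₀ r₁) (γ + y) := by
  have hN₀ : ∀ j, Phi1 τ (((k * A j : ℤ) : ℂ) * (γ + y) + r₀ j) =
      (-1 : ℂ) ^ (A j * (α + β)) * Phi1 τ (((k * A j : ℤ) : ℂ) * 0 + (y * (k * A j : ℤ) + r₀ j)) :=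
    fun j => by
      rw [mul_add (A j), ← Phi1_add_lattice hτ _ (A j * α) (A j * β)]
      congr 1
      push_cast
      linear_combination (A j : ℂ) * hkγ
  have hN₁ : ∀ j, Phi1 τ ((a₁ j : ℂ) * (γ + y) + r₁ j) =
      Phi1 τ ((a₁ j : ℂ) * γ + (y * (a₁ j : ℂ) + r₁ j)) := fun j => by ring_nf
  have hsign : ∏ j, (-1 : ℂ) ^ (A j * (α + β)) = ((-1 : ℂ) ^ (∑ j, A j)) ^ (α + β) := by
    rw [Finset.prod_zpow_eq_zpow_sum (by norm_num), ← zpow_mul, Finset.sum_mul]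
  have hinv : ∀ s : ℂ, s = 1 ∨ s = -1 → s⁻¹ = s := by rintro s (rfl | rfl) <;> norm_num
  rw [Zdiag_eq_inv_mul_prod, Zdiag_eq_inv_mul_prod, Zdiag_eq_inv_mul_prod, Fintype.prod_sum_type]
  simp only [Sum.elim_inl, Sum.elim_inr, hN₀, hN₁, Finset.prod_mul_distrib, hsign,
    hinv ν₀ hν₀, hinv ν₁ hν₁]
  set P₀ := ∏ j, Phi1 τ (((k * A j : ℤ) : ℂ) * 0 + (y * (k * A j : ℤ) + r₀ j))
  set P₁ := ∏ j, Phi1 τ ((a₁ j : ℂ) * γ + (y * (a₁ j : ℂ) + r₁ j))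
  set s := ((-1 : ℂ) ^ (∑ j, A j)) ^ (α + β)
  have hunit : s * s * (ν * ν⁻¹) = 1 := by
    rw [← mul_zpow, ← mul_zpow, hinv ν hν]
    rcases hν with rfl | rfl <;> norm_num
  linear_combination (-(os ^ (α + β) * ν₀ * ν₁ * P₀ * P₁)) * hunit

theorem transfer_formula (τ : ℂ) (hτ : 0 < τ.im)
    (k α β : ℤ) (hk : 1 ≤ k) (γ : ℂ) (hkγ : (k : ℂ) * γ = (α : ℂ) + (β : ℂ) * τ)
    -- γ is exactly of order k in E_τ:
    (horder : ∀ l : ℤ, 0 < l → l < k → ∀ c d : ℤ, (l : ℂ) * γ ≠ (c : ℂ) + (d : ℂ) * τ)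
    {m₀ m₁ : ℕ} (A : Fin m₀ → ℤ) (a₁ : Fin m₁ → ℤ) (hprim : ∀ j, ¬ (k ∣ a₁ j))
    (r₀ : Fin m₀ → ℂ) (r₁ : Fin m₁ → ℂ) (y : ℂ)
    (ν₀ ν₁ ν os : ℂ) (hν₀ : ν₀ = 1 ∨ ν₀ = -1) (hν₁ : ν₁ = 1 ∨ ν₁ = -1)
    (hν : ν = 1 ∨ ν = -1) (hos : os = 1 ∨ os = -1)
    -- definedness hypotheses ("y sufficiently small"):
    (hpre0 : ∀ j, Complex.exp (-((π : ℂ) * I * (((k * A j : ℤ) : ℂ) * y + r₀ j))) -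
      Complex.exp ((π : ℂ) * I * (((k * A j : ℤ) : ℂ) * y + r₀ j)) ≠ 0)
    (hpre0' : ∀ j, Complex.exp (-((π : ℂ) * I * (((k * A j : ℤ) : ℂ) * (γ + y) + r₀ j))) -
      Complex.exp ((π : ℂ) * I * (((k * A j : ℤ) : ℂ) * (γ + y) + r₀ j)) ≠ 0)
    (hpre1 : ∀ j, Complex.exp (-((π : ℂ) * I * ((a₁ j : ℂ) * (γ + y) + r₁ j))) -
      Complex.exp ((π : ℂ) * I * ((a₁ j : ℂ) * (γ + y) + r₁ j)) ≠ 0)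
    (hden0 : ∀ j n, phiDenF τ (((k * A j : ℤ) : ℂ) * y + r₀ j) n ≠ 0)
    (hden0' : ∀ j n, phiDenF τ (((k * A j : ℤ) : ℂ) * (γ + y) + r₀ j) n ≠ 0)
    (hden1 : ∀ j n, phiDenF τ ((a₁ j : ℂ) * (γ + y) + r₁ j) n ≠ 0)
    (hnum0 : ∀ j n, phiNumF τ (((k * A j : ℤ) : ℂ) * y + r₀ j) n ≠ 0)
    (hnum0' : ∀ j n, phiNumF τ (((k * A j : ℤ) : ℂ) * (γ + y) + r₀ j) n ≠ 0) :
    Zdiag τ ν₀ (fun j => k * A j) (fun j => y * ((k * A j : ℤ) : ℂ) + r₀ j) 0 *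
      (os ^ (α + β) * Zdiag τ ν₁ a₁ (fun j => y * ((a₁ j : ℂ)) + r₁ j) γ) =
    (os ^ (α + β) * ((-1 : ℂ) ^ (∑ j, A j)) ^ (α + β) * (ν * ν₀ * ν₁)) *
      Zdiag τ ν (Sum.elim (fun j => k * A j) a₁) (Sum.elim r₀ r₁) (γ + y) :=
  transfer_formula_general τ hτ k α β γ hkγ A a₁ r₀ r₁ y ν₀ ν₁ ν os hν₀ hν₁ hν

end
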